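/- Let (Σ,μ) be a σ-finite measure space, A an accretive operator on L¹(Σ,μ), and φ : ℝ → ℝ a nondecreasing function. Define φ₁ := {(u, φ∘u) : u ∈ L¹(Σ,μ), φ∘u ∈ L¹(Σ,μ)} and the composition Aφ := {(u,v) : u ∈ L¹(Σ,μ), φ∘u ∈ L¹(Σ,μ), (φ∘u, v) ∈ A}. Assume that one of the following holds: (i) A is s-accretive in L¹(Σ,μ) and single-valued (i.e., (w,v),(w,v′) ∈ A implies v = v′); or (ii) φ is injective. Then for every ε ≥ 0 the operator εφ₁ + Aφ := {(u, εφ∘u + v) : (u,v) ∈ Aφ} is accretive in L¹(Σ,μ), i.e., ‖u − û‖₁ ≤ ‖(u − û) + λ((εφ∘u + v) − (εφ∘û + v̂))‖₁ for all (u,v),(û,v̂) ∈ Aφ and all λ ≥ 0. -/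

import Mathlib

open MeasureTheory Filter ENNReal Topology

namespace Statement15

variable {α : Type*} [MeasurableSpace α]

/-- `A` is accretive in `L¹(Σ,μ)`. -/
def Accretive1 (μ : Measure α) (A : Set (Lp ℝ 1 μ × Lp ℝ 1 μ)) : Prop :=
  ∀ uv ∈ A, ∀ uv' ∈ A, ∀ l : ℝ, 0 ≤ l →
    eLpNorm (⇑(uv.1 - uv'.1)) 1 μ ≤
      eLpNorm (⇑(uv.1 - uv'.1 + l • (uv.2 - uv'.2))) 1 μ

/-- `A` is s-accretive in `L¹(Σ,μ)`: for all `(w,v), (ŵ,v̂) ∈ A` and every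
`ψ ∈ L^∞(Σ,μ)` with `|ψ| ≤ 1` a.e., `ψ = 1` a.e. on `{w > ŵ}` and `ψ = −1` a.e. on
`{w < ŵ}`, one has `∫ ψ (v − v̂) dμ ≥ 0`. -/
def SAccretive1 (μ : Measure α) (A : Set (Lp ℝ 1 μ × Lp ℝ 1 μ)) : Prop :=
  ∀ uv ∈ A, ∀ uv' ∈ A, ∀ ψ : α → ℝ, MemLp ψ ⊤ μ →
    (∀ᵐ x ∂μ, |ψ x| ≤ 1) →
    (∀ᵐ x ∂μ, uv'.1 x < uv.1 x → ψ x = 1) →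
    (∀ᵐ x ∂μ, uv.1 x < uv'.1 x → ψ x = -1) →
    0 ≤ ∫ x, ψ x * (uv.2 x - uv'.2 x) ∂μ

/-- `A` is single-valued. -/
def SingleValued (μ : Measure α) (A : Set (Lp ℝ 1 μ × Lp ℝ 1 μ)) : Prop :=
  ∀ uv ∈ A, ∀ uv' ∈ A, uv.1 = uv'.1 → uv.2 = uv'.2

/-- The composition `Aφ`: `(u,v) ∈ Aφ` iff `u ∈ L¹`, `φ ∘ u ∈ L¹` and `(φ∘u, v) ∈ A`. -/
def compOp (μ : Measure α) (A : Set (Lp ℝ 1 μ × Lp ℝ 1 μ)) (φ : ℝ → ℝ) :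
    Set (Lp ℝ 1 μ × Lp ℝ 1 μ) :=
  {uv | ∃ w : Lp ℝ 1 μ, (w, uv.2) ∈ A ∧ ⇑w =ᵐ[μ] fun x => φ (uv.1 x)}

noncomputable def S : ℝ → ℝ := fun t => if t < 0 then -1 else if 0 < t then 1 else 0
lemma S_abs_le (t : ℝ) : |S t| ≤ 1 := by unfold S; split_ifs <;> simp
lemma S_mul_self (t : ℝ) : S t * t = |t| := by
  unfold S
  rcases lt_trichotomy t 0 with h | h | h
  · simp [h, abs_of_neg h]
  · simp [h]
  · simp [h, h.not_gt, abs_of_pos h]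
lemma S_pos {t : ℝ} (h : 0 < t) : S t = 1 := by simp [S, h, h.not_gt]
lemma S_neg {t : ℝ} (h : t < 0) : S t = -1 := by simp [S, h]
lemma S_zero : S 0 = 0 := by simp [S]
lemma S_measurable : Measurable S := by
  unfold S
  exact Measurable.ite (measurableSet_lt measurable_id measurable_const) measurable_const
    (Measurable.ite (measurableSet_lt measurable_const measurable_id) measurable_const
      measurable_const)

lemma elpnorm_eq {μ : Measure α} {f : α → ℝ} (hf : Integrable f μ) :
    eLpNorm f 1 μ = ENNReal.ofReal (∫ x, |f x| ∂μ) := by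
  rw [eLpNorm_one_eq_lintegral_enorm, ← ofReal_integral_norm_eq_lintegral_enorm hf]
  simp [Real.norm_eq_abs]

lemma ptwise (t cb l : ℝ) : S t * t + l * (S t * cb) ≤ |t + l * cb| := by
  have h1 : S t * t + l * (S t * cb) = S t * (t + l * cb) := by ring
  rw [h1]
  calc S t * (t + l * cb) ≤ |S t * (t + l * cb)| := le_abs_self _
    _ = |S t| * |t + l * cb| := abs_mul _ _
    _ ≤ 1 * |t + l * cb| := mul_le_mul_of_nonneg_right (S_abs_le t) (abs_nonneg _)
    _ = |t + l * cb| := one_mul _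

lemma core {μ : Measure α} {d F h : α → ℝ}
    (hd_int : Integrable d μ) (hF_int : Integrable F μ) (hh_int : Integrable h μ)
    {l : ℝ}
    (hae : ∀ᵐ x ∂μ, |d x| + l * h x ≤ |F x|)
    (hh : 0 ≤ l * ∫ x, h x ∂μ) :
    eLpNorm d 1 μ ≤ eLpNorm F 1 μ := by
  rw [elpnorm_eq hd_int, elpnorm_eq hF_int]
  apply ENNReal.ofReal_le_ofReal
  have h1 : ∫ x, (|d x| + l * h x) ∂μ ≤ ∫ x, |F x| ∂μ :=
    integral_mono_ae (hd_int.abs.add (hh_int.const_mul l)) hF_int.abs hae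
  rw [integral_add hd_int.abs (hh_int.const_mul l), integral_const_mul] at h1
  linarith

lemma bracket_nonneg {μ : Measure α} {c b : α → ℝ}
    (hc : Integrable c μ) (hb : Integrable b μ)
    (hacc : ∀ t : ℝ, 0 < t → ∫ x, |c x| ∂μ ≤ ∫ x, |c x + t * b x| ∂μ) :
    0 ≤ ∫ x, (if c x = 0 then |b x| else S (c x) * b x) ∂μ := by
  set g : α → ℝ := fun x => if c x = 0 then |b x| else S (c x) * b x with hg
  set Fn : ℕ → α → ℝ := fun n x => (n + 1 : ℝ) * (|c x + (1 / (n + 1 : ℝ)) * b x| - |c x|)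
    with hFn
  have hpos : ∀ n : ℕ, (0 : ℝ) < (n + 1 : ℝ) := fun n => by positivity
  have hint : ∀ n : ℕ, Integrable (fun x => |c x + (1 / (n + 1 : ℝ)) * b x|) μ :=
    fun n => (hc.add (hb.const_mul _)).abs
  have hFint : ∀ n : ℕ, Integrable (Fn n) μ :=
    fun n => ((hint n).sub hc.abs).const_mul _
  have hbound : ∀ n : ℕ, ∀ᵐ x ∂μ, ‖Fn n x‖ ≤ |b x| := by
    intro n
    filter_upwards with x
    have h2 : ‖|c x + (1 / (n + 1 : ℝ)) * b x| - |c x|‖ ≤ (1 / (n + 1 : ℝ)) * |b x| := by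
      rw [Real.norm_eq_abs]
      calc |(|c x + (1 / (n + 1 : ℝ)) * b x|) - (|c x|)|
          ≤ |(c x + (1 / (n + 1 : ℝ)) * b x) - c x| := abs_abs_sub_abs_le_abs_sub _ _
        _ = (1 / (n + 1 : ℝ)) * |b x| := by
            rw [add_sub_cancel_left, abs_mul, abs_of_pos (by positivity)]
    calc ‖Fn n x‖ = (n + 1 : ℝ) * ‖|c x + (1 / (n + 1 : ℝ)) * b x| - |c x|‖ := by
          rw [hFn]; simp [Real.norm_eq_abs, abs_mul, abs_of_pos (hpos n)]
      _ ≤ (n + 1 : ℝ) * ((1 / (n + 1 : ℝ)) * |b x|) :=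
          mul_le_mul_of_nonneg_left h2 (hpos n).le
      _ = |b x| := by field_simp
  have hlim : ∀ᵐ x ∂μ, Tendsto (fun n => Fn n x) atTop (𝓝 (g x)) := by
    filter_upwards with x
    by_cases hcx : c x = 0
    · have : ∀ n : ℕ, Fn n x = |b x| := by
        intro n
        rw [hFn]
        simp only [hcx, zero_add, abs_mul, abs_of_pos (one_div_pos.mpr (hpos n)), sub_zero,
          abs_zero]
        field_simp
      simp only [hg, hcx, if_pos]
      simpa [this] using tendsto_const_nhds
    · have htend : Tendsto (fun n : ℕ => c x + (1 / (n + 1 : ℝ)) * b x) atTop (𝓝 (c x)) := by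
        have h0 : Tendsto (fun n : ℕ => (1 / (n + 1 : ℝ)) * b x) atTop (𝓝 (0 * b x)) :=
          tendsto_one_div_add_atTop_nhds_zero_nat.mul_const _
        simpa using tendsto_const_nhds.add h0
      have hev : ∀ᶠ n in atTop, Fn n x = S (c x) * b x := by
        rcases Ne.lt_or_gt hcx with hneg | hpos'
        · filter_upwards [htend.eventually (eventually_lt_nhds hneg)] with n hn
          rw [hFn, S_neg hneg]
          simp only
          rw [abs_of_neg hn, abs_of_neg hneg]
          field_simp
          ring
        · filter_upwards [htend.eventually (eventually_gt_nhds hpos')] with n hn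
          rw [hFn, S_pos hpos']
          simp only
          rw [abs_of_pos hn, abs_of_pos hpos']
          field_simp
          ring
      have : g x = S (c x) * b x := by simp [hg, hcx]
      rw [this]
      exact Tendsto.congr' (hev.mono fun n h => h.symm) tendsto_const_nhds
  have htendI : Tendsto (fun n => ∫ x, Fn n x ∂μ) atTop (𝓝 (∫ x, g x ∂μ)) :=
    tendsto_integral_of_dominated_convergence _ (fun n => (hFint n).aestronglyMeasurable)
      hb.abs hbound hlim
  refine ge_of_tendsto' htendI fun n => ?_
  have : ∫ x, Fn n x ∂μ
      = (n + 1 : ℝ) * ((∫ x, |c x + (1 / (n + 1 : ℝ)) * b x| ∂μ) - ∫ x, |c x| ∂μ) := by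
    rw [hFn]
    rw [integral_const_mul, integral_sub (hint n) hc.abs]
  rw [this]
  have := hacc (1 / (n + 1 : ℝ)) (by positivity)
  nlinarith [hpos n]


/-- **Accretivity of `εφ₁ + Aφ` in `L¹`.**  If `A` is accretive in `L¹(Σ,μ)`,
`φ : ℝ → ℝ` is nondecreasing, and either (`A` is s-accretive and single-valued) or
`φ` is injective, then for every `ε ≥ 0` the operator `εφ₁ + Aφ` is accretive in
`L¹(Σ,μ)`. -/
theorem composition_accretive
    (μ : Measure α) [SigmaFinite μ]
    (A : Set (Lp ℝ 1 μ × Lp ℝ 1 μ)) (hA : Accretive1 μ A)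
    (φ : ℝ → ℝ) (hφ : Monotone φ)
    (hcase : (SAccretive1 μ A ∧ SingleValued μ A) ∨ Function.Injective φ) :
    ∀ ε : ℝ, 0 ≤ ε →
      ∀ uv ∈ compOp μ A φ, ∀ uv' ∈ compOp μ A φ, ∀ l : ℝ, 0 ≤ l →
        eLpNorm (⇑(uv.1 - uv'.1)) 1 μ ≤
          eLpNorm (fun x => (uv.1 x - uv'.1 x) +
            l * ((ε * φ (uv.1 x) + uv.2 x) - (ε * φ (uv'.1 x) + uv'.2 x))) 1 μ := by
  intro ε hε p hp q hq l hl
  obtain ⟨w, hwA, hw⟩ := hp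
  obtain ⟨w', hw'A, hw'⟩ := hq
  -- basic a.e. / integrability facts
  have hwc : (fun x => w x - w' x) =ᵐ[μ] fun x => φ (p.1 x) - φ (q.1 x) := by
    filter_upwards [hw, hw'] with x h1 h2
    simp [h1, h2]
  have hc_int : Integrable (fun x => φ (p.1 x) - φ (q.1 x)) μ :=
    (((L1.integrable_coeFn w).sub (L1.integrable_coeFn w'))).congr hwc
  have hb_int : Integrable (fun x => p.2 x - q.2 x) μ :=
    (L1.integrable_coeFn p.2).sub (L1.integrable_coeFn q.2)
  have hd : ⇑(p.1 - q.1) =ᵐ[μ] fun x => p.1 x - q.1 x := Lp.coeFn_sub _ _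
  have hd_int : Integrable (⇑(p.1 - q.1)) μ := L1.integrable_coeFn _
  have hF_int : Integrable (fun x => (p.1 x - q.1 x) +
      l * ((ε * φ (p.1 x) + p.2 x) - (ε * φ (q.1 x) + q.2 x))) μ := by
    have h0 : Integrable (fun x => (p.1 x - q.1 x) +
        l * (ε * (φ (p.1 x) - φ (q.1 x)) + (p.2 x - q.2 x))) μ :=
      ((L1.integrable_coeFn p.1).sub (L1.integrable_coeFn q.1)).add
        (((hc_int.const_mul ε).add hb_int).const_mul l)
    exact h0.congr (Eventually.of_forall fun x => by ring)
  have hcb_int : Integrable (fun x => ε * (φ (p.1 x) - φ (q.1 x)) + (p.2 x - q.2 x)) μ :=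
    (hc_int.const_mul ε).add hb_int
  have hψmeas : Measurable fun x => S (p.1 x - q.1 x) :=
    S_measurable.comp ((Lp.stronglyMeasurable p.1).measurable.sub
      (Lp.stronglyMeasurable q.1).measurable)
  rcases hcase with ⟨hS, _⟩ | hinj
  · -- case (i): s-accretive
    refine core (l := l) hd_int hF_int
      (hcb_int.bdd_mul (c := 1) hψmeas.aestronglyMeasurable
        (Eventually.of_forall fun x => by simpa [Real.norm_eq_abs] using S_abs_le (p.1 x - q.1 x)))
      ?_ ?_
    · -- pointwise inequality
      filter_upwards [hd] with x hdx
      rw [hdx, ← S_mul_self]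
      have e : (p.1 x - q.1 x) + l * ((ε * φ (p.1 x) + p.2 x) - (ε * φ (q.1 x) + q.2 x))
          = (p.1 x - q.1 x) + l * (ε * (φ (p.1 x) - φ (q.1 x)) + (p.2 x - q.2 x)) := by ring
      rw [e]
      exact ptwise _ _ _
    · -- integral of h is nonnegative
      rcases eq_or_lt_of_le hl with rfl | hl'
      · simp
      refine mul_nonneg hl ?_
      have hsplit : ∀ x, S (p.1 x - q.1 x) * (ε * (φ (p.1 x) - φ (q.1 x)) + (p.2 x - q.2 x))
          = ε * (S (p.1 x - q.1 x) * (φ (p.1 x) - φ (q.1 x)))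
            + S (p.1 x - q.1 x) * (p.2 x - q.2 x) := fun x => by ring
      have h1_int : Integrable (fun x => S (p.1 x - q.1 x) * (φ (p.1 x) - φ (q.1 x))) μ :=
        hc_int.bdd_mul (c := 1) hψmeas.aestronglyMeasurable
          (Eventually.of_forall fun x => by simpa [Real.norm_eq_abs] using S_abs_le (p.1 x - q.1 x))
      have h2_int : Integrable (fun x => S (p.1 x - q.1 x) * (p.2 x - q.2 x)) μ :=
        hb_int.bdd_mul (c := 1) hψmeas.aestronglyMeasurable
          (Eventually.of_forall fun x => by simpa [Real.norm_eq_abs] using S_abs_le (p.1 x - q.1 x))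
      calc (0:ℝ) ≤ ε * (∫ x, S (p.1 x - q.1 x) * (φ (p.1 x) - φ (q.1 x)) ∂μ)
            + ∫ x, S (p.1 x - q.1 x) * (p.2 x - q.2 x) ∂μ := by
            have hA1 : 0 ≤ ∫ x, S (p.1 x - q.1 x) * (φ (p.1 x) - φ (q.1 x)) ∂μ := by
              refine integral_nonneg fun x => ?_
              show (0:ℝ) ≤ S (p.1 x - q.1 x) * (φ (p.1 x) - φ (q.1 x))
              rcases lt_trichotomy (p.1 x) (q.1 x) with h | h | h
              · rw [S_neg (sub_neg.mpr h)]
                nlinarith [hφ h.le]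
              · simp [h]
              · rw [S_pos (sub_pos.mpr h)]
                nlinarith [hφ h.le]
            have hA2 : 0 ≤ ∫ x, S (p.1 x - q.1 x) * (p.2 x - q.2 x) ∂μ := by
              have := hS (w, p.2) hwA (w', q.2) hw'A (fun x => S (p.1 x - q.1 x))
                (memLp_top_of_bound hψmeas.aestronglyMeasurable 1
                  (Eventually.of_forall fun x => by
                    simpa [Real.norm_eq_abs] using S_abs_le (p.1 x - q.1 x)))
                (Eventually.of_forall fun x => S_abs_le _)
                ?_ ?_
              · exact this
              · filter_upwards [hw, hw'] with x h1 h2 hlt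
                rw [h1, h2] at hlt
                have : q.1 x < p.1 x := by
                  by_contra hcon
                  exact absurd (hφ (not_lt.mp hcon)) (not_le.mpr hlt)
                exact S_pos (sub_pos.mpr this)
              · filter_upwards [hw, hw'] with x h1 h2 hlt
                rw [h1, h2] at hlt
                have : p.1 x < q.1 x := by
                  by_contra hcon
                  exact absurd (hφ (not_lt.mp hcon)) (not_le.mpr hlt)
                exact S_neg (sub_neg.mpr this)
            nlinarith
        _ = ∫ x, S (p.1 x - q.1 x) * (ε * (φ (p.1 x) - φ (q.1 x)) + (p.2 x - q.2 x)) ∂μ := by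
            rw [← integral_const_mul, ← integral_add (h1_int.const_mul ε) h2_int]
            exact integral_congr_ae (Eventually.of_forall fun x => (hsplit x).symm)
  · -- case (ii): φ injective
    have hcmeas : Measurable fun x => φ (p.1 x) - φ (q.1 x) :=
      (hφ.measurable.comp (Lp.stronglyMeasurable p.1).measurable).sub
        (hφ.measurable.comp (Lp.stronglyMeasurable q.1).measurable)
    have hbmeas : Measurable fun x => p.2 x - q.2 x :=
      (Lp.stronglyMeasurable p.2).measurable.sub (Lp.stronglyMeasurable q.2).measurable
    set g : α → ℝ := fun x => if φ (p.1 x) - φ (q.1 x) = 0 then |p.2 x - q.2 x|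
      else S (φ (p.1 x) - φ (q.1 x)) * (p.2 x - q.2 x) with hgdef
    have hgmeas : Measurable g :=
      Measurable.ite (hcmeas (measurableSet_singleton 0)) hbmeas.abs
        ((S_measurable.comp hcmeas).mul hbmeas)
    have hg_int : Integrable g μ := by
      refine hb_int.abs.mono' hgmeas.aestronglyMeasurable ?_
      filter_upwards with x
      simp only [hgdef, Real.norm_eq_abs]
      split_ifs
      · simp
      · calc |S (φ (p.1 x) - φ (q.1 x)) * (p.2 x - q.2 x)|
            = |S (φ (p.1 x) - φ (q.1 x))| * |p.2 x - q.2 x| := abs_mul _ _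
          _ ≤ 1 * |p.2 x - q.2 x| := mul_le_mul_of_nonneg_right (S_abs_le _) (abs_nonneg _)
          _ = |p.2 x - q.2 x| := one_mul _
    have hh_int : Integrable (fun x => ε * |φ (p.1 x) - φ (q.1 x)| + g x) μ :=
      (hc_int.abs.const_mul ε).add hg_int
    refine core (l := l) hd_int hF_int hh_int ?_ ?_
    · -- pointwise inequality
      filter_upwards [hd] with x hdx
      rw [hdx]
      by_cases h0 : p.1 x = q.1 x
      · have hgx : g x = |p.2 x - q.2 x| := by
          simp only [hgdef]
          rw [if_pos (by rw [h0, sub_self])]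
        rw [hgx, h0]
        have e : (q.1 x - q.1 x) + l * ((ε * φ (q.1 x) + p.2 x) - (ε * φ (q.1 x) + q.2 x))
            = l * (p.2 x - q.2 x) := by ring
        rw [e, abs_mul, abs_of_nonneg hl]
        simp
      · have hc0 : φ (p.1 x) - φ (q.1 x) ≠ 0 := by
          intro hc
          exact h0 (hinj (by linarith [sub_eq_zero.mp hc]))
        have hsign : S (φ (p.1 x) - φ (q.1 x)) = S (p.1 x - q.1 x) := by
          rcases lt_trichotomy (p.1 x) (q.1 x) with h | h | h
          · have hcneg : φ (p.1 x) - φ (q.1 x) < 0 :=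
              lt_of_le_of_ne (by linarith [hφ h.le]) hc0
            rw [S_neg hcneg, S_neg (sub_neg.mpr h)]
          · exact absurd h h0
          · have hcpos : 0 < φ (p.1 x) - φ (q.1 x) :=
              lt_of_le_of_ne (by linarith [hφ h.le]) (Ne.symm hc0)
            rw [S_pos hcpos, S_pos (sub_pos.mpr h)]
        have hgx : g x = S (p.1 x - q.1 x) * (p.2 x - q.2 x) := by
          rw [hgdef]; simp only [if_neg hc0, hsign]
        have habs : ε * |φ (p.1 x) - φ (q.1 x)|
            = ε * (S (p.1 x - q.1 x) * (φ (p.1 x) - φ (q.1 x))) := by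
          rw [← hsign, S_mul_self]
        rw [hgx, habs, ← S_mul_self]
        have e : (p.1 x - q.1 x) + l * ((ε * φ (p.1 x) + p.2 x) - (ε * φ (q.1 x) + q.2 x))
            = (p.1 x - q.1 x) + l * (ε * (φ (p.1 x) - φ (q.1 x)) + (p.2 x - q.2 x)) := by ring
        rw [e]
        have := ptwise (p.1 x - q.1 x) (ε * (φ (p.1 x) - φ (q.1 x)) + (p.2 x - q.2 x)) l
        nlinarith [this]
    · -- nonnegativity of ∫ h
      refine mul_nonneg hl ?_
      rw [integral_add (hc_int.abs.const_mul ε) hg_int, integral_const_mul]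
      have h1 : 0 ≤ ∫ x, |φ (p.1 x) - φ (q.1 x)| ∂μ :=
        integral_nonneg fun x => abs_nonneg _
      have h2 : 0 ≤ ∫ x, g x ∂μ := by
        refine bracket_nonneg hc_int hb_int fun t ht => ?_
        have key := hA (w, p.2) hwA (w', q.2) hw'A t ht.le
        have e1 : eLpNorm (⇑((w, p.2).1 - (w', q.2).1)) 1 μ
            = ENNReal.ofReal (∫ x, |φ (p.1 x) - φ (q.1 x)| ∂μ) := by
          rw [elpnorm_eq (L1.integrable_coeFn _)]
          congr 1
          refine integral_congr_ae ?_
          filter_upwards [Lp.coeFn_sub w w', hwc] with x hx1 hx2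
          simp only [hx1, Pi.sub_apply]
          rw [hx2]
        have e2 : eLpNorm (⇑((w, p.2).1 - (w', q.2).1 + t • ((w, p.2).2 - (w', q.2).2))) 1 μ
            = ENNReal.ofReal (∫ x, |(φ (p.1 x) - φ (q.1 x)) + t * (p.2 x - q.2 x)| ∂μ) := by
          rw [elpnorm_eq (L1.integrable_coeFn _)]
          congr 1
          refine integral_congr_ae ?_
          filter_upwards [Lp.coeFn_add (w - w') (t • (p.2 - q.2)), Lp.coeFn_sub w w',
            Lp.coeFn_smul t (p.2 - q.2), Lp.coeFn_sub p.2 q.2, hwc] with x hx1 hx2 hx3 hx4 hx5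
          simp only [Pi.add_apply, Pi.sub_apply, Pi.smul_apply, smul_eq_mul] at hx1 hx2 hx3 hx4
          rw [hx1, hx2, hx3, hx4, hx5]
        rw [e1, e2] at key
        exact (ENNReal.ofReal_le_ofReal_iff
          (integral_nonneg fun x => abs_nonneg _)).mp key
      nlinarith

end Statement15
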